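/- Let l > 0, T > 0, b > 0, let F, G : ℝ → ℝ be continuously differentiable, and let φ : [0,l] × (0,T) → ℝ be such that φ, ∂_t φ, ∂_x φ, ∂_x² φ, ∂_t ∂_x φ = ∂_x ∂_t φ exist and are jointly continuous, and such that, writing μ := -∂_x² φ + F'(φ), also ∂_x μ and ∂_x² μ exist and are jointly continuous on [0,l] × (0,T). Assume ∂_t φ = ∂_x² μ on [0,l] × (0,T), together with the boundary conditions ∂_t φ(0,t) - b ∂_x μ(0,t) = 0, ∂_t φ(l,t) + b ∂_x μ(l,t) = 0, μ(0,t)/b = -∂_x φ(0,t) + G'(φ(0,t)) and μ(l,t)/b = ∂_x φ(l,t) + G'(φ(l,t)) for all t ∈ (0,T). Then for every t ∈ (0,T) the total energy E(t) = ∫₀^l [(1/2)(∂_x φ(x,t))² + F(φ(x,t))] dx + G(φ(0,t)) + G(φ(l,t)) is differentiable in t with d/dt E(t) = -∫₀^l (∂_x μ(x,t))² dx. -/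

import Mathlib

/-!
Differentiating under the integral sign, the bulk energy changes at the rate
`∫ φx φtx + F'(φ) φt`. Since `φt = μxx` and `μ = -φxx + F'(φ)`, this integrand plus `μx²` is the
`x`-derivative of the flux `φx φt + μ μx`, so the rate equals the boundary values of the flux minus
`∫ μx²`. The dynamic boundary conditions make the flux at each wall cancel the rate of change
`G'(φ) φt` of the surface energy there.
-/

open Set Function MeasureTheory
open scoped Interval

theorem hasDerivAt_intervalIntegral_of_continuousOn {E : Type*} [NormedAddCommGroup E]
    [NormedSpace ℝ E] {f f' : ℝ → ℝ → E} {a b : ℝ} {U : Set ℝ} (hU : IsOpen U)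
    (hf : ContinuousOn (uncurry f) ([[a, b]] ×ˢ U))
    (hf' : ContinuousOn (uncurry f') ([[a, b]] ×ˢ U))
    (hderiv : ∀ x ∈ [[a, b]], ∀ τ ∈ U, HasDerivAt (f x) (f' x τ) τ) {t : ℝ} (ht : t ∈ U) :
    HasDerivAt (fun τ => ∫ x in a..b, f x τ) (∫ x in a..b, f' x t) t := by
  obtain ⟨ε, hε, hεU⟩ := Metric.nhds_basis_closedBall.mem_iff.mp (hU.mem_nhds ht)
  obtain ⟨C, hC⟩ := (isCompact_uIcc.prod (isCompact_closedBall t ε)).exists_bound_of_continuousOn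
    (hf'.mono (prod_mono_right hεU))
  refine (intervalIntegral.hasDerivAt_integral_of_dominated_loc_of_deriv_le
    (F := fun τ x => f x τ) (F' := fun τ x => f' x τ) (bound := fun _ => C)
    (Metric.ball_mem_nhds t hε) ?_ (hf.uncurry_right t ht).intervalIntegrable
    (hf'.uncurry_right t ht).intervalIntegrable.aestronglyMeasurable_restrict_uIoc ?_
    intervalIntegrable_const ?_).2
  · filter_upwards [hU.mem_nhds ht] with τ hτ
    exact (hf.uncurry_right τ hτ).intervalIntegrable.aestronglyMeasurable_restrict_uIoc
  · exact .of_forall fun x hx τ hτ =>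
      hC (x, τ) ⟨uIoc_subset_uIcc hx, Metric.ball_subset_closedBall hτ⟩
  · exact .of_forall fun x hx τ hτ =>
      hderiv x (uIoc_subset_uIcc hx) τ (hεU (Metric.ball_subset_closedBall hτ))

theorem hasDerivAt_integral_ginzburgLandau {F : ℝ → ℝ} (hF : ContDiff ℝ 1 F) {a b : ℝ}
    {U : Set ℝ} (hU : IsOpen U) {φ φt φx φtx : ℝ → ℝ → ℝ}
    (hφt : ∀ x ∈ [[a, b]], ∀ τ ∈ U, HasDerivAt (φ x) (φt x τ) τ)
    (hφtx : ∀ x ∈ [[a, b]], ∀ τ ∈ U, HasDerivAt (φx x) (φtx x τ) τ)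
    (hφc : ContinuousOn (uncurry φ) ([[a, b]] ×ˢ U))
    (hφtc : ContinuousOn (uncurry φt) ([[a, b]] ×ˢ U))
    (hφxc : ContinuousOn (uncurry φx) ([[a, b]] ×ˢ U))
    (hφtxc : ContinuousOn (uncurry φtx) ([[a, b]] ×ˢ U)) {t : ℝ} (ht : t ∈ U) :
    HasDerivAt (fun τ => ∫ x in a..b, (1 / 2 * (φx x τ) ^ 2 + F (φ x τ)))
      (∫ x in a..b, (φx x t * φtx x t + deriv F (φ x t) * φt x t)) t := by
  have hF' : Continuous (deriv F) := hF.continuous_deriv le_rfl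
  refine hasDerivAt_intervalIntegral_of_continuousOn
    (f := fun x τ => 1 / 2 * φx x τ ^ 2 + F (φ x τ))
    (f' := fun x τ => φx x τ * φtx x τ + deriv F (φ x τ) * φt x τ) hU ?_ ?_ ?_ ht
  · exact (continuousOn_const.mul (hφxc.pow 2)).add (hF.continuous.comp_continuousOn hφc)
  · exact (hφxc.mul hφtxc).add ((hF'.comp_continuousOn hφc).mul hφtc)
  · intro x hx τ hτ
    have hsq := ((hφtx x hx τ hτ).pow 2).const_mul (1 / 2 : ℝ)
    have hpot := (hF.differentiable one_ne_zero (φ x τ)).hasDerivAt.comp τ (hφt x hx τ hτ)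
    exact (hsq.add hpot).congr_deriv (by ring)

theorem integral_ginzburgLandau_rate_eq {F : ℝ → ℝ} (hF' : Continuous (deriv F)) {a b : ℝ}
    {u ux uxx v vx mx mxx : ℝ → ℝ}
    (hu : ∀ x ∈ [[a, b]], HasDerivAt u (ux x) x)
    (hux : ∀ x ∈ [[a, b]], HasDerivAt ux (uxx x) x)
    (hv : ∀ x ∈ [[a, b]], HasDerivAt v (vx x) x) (hvx : ContinuousOn vx [[a, b]])
    (hm : ∀ x ∈ [[a, b]], HasDerivAt (fun y => -uxx y + deriv F (u y)) (mx x) x)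
    (hmx : ∀ x ∈ [[a, b]], HasDerivAt mx (mxx x) x) (hpde : ∀ x ∈ [[a, b]], v x = mxx x) :
    ∫ x in a..b, (ux x * vx x + deriv F (u x) * v x) =
      (ux b * v b + (-uxx b + deriv F (u b)) * mx b) -
        (ux a * v a + (-uxx a + deriv F (u a)) * mx a) - ∫ x in a..b, mx x ^ 2 := by
  have hrate_cont : ContinuousOn (fun x => ux x * vx x + deriv F (u x) * v x) [[a, b]] :=
    ((HasDerivAt.continuousOn hux).mul hvx).add
      ((hF'.comp_continuousOn (HasDerivAt.continuousOn hu)).mul (HasDerivAt.continuousOn hv))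
  have hdiss_cont : ContinuousOn (fun x => mx x ^ 2) [[a, b]] := (HasDerivAt.continuousOn hmx).pow 2
  have hflux : ∀ x ∈ [[a, b]], HasDerivAt (fun y => ux y * v y + (-uxx y + deriv F (u y)) * mx y)
      ((ux x * vx x + deriv F (u x) * v x) + mx x ^ 2) x := fun x hx =>
    (((hux x hx).mul (hv x hx)).add ((hm x hx).mul (hmx x hx))).congr_deriv
      (by rw [hpde x hx]; ring)
  rw [← intervalIntegral.integral_eq_sub_of_hasDerivAt hflux
    (hrate_cont.add hdiss_cont).intervalIntegrable, intervalIntegral.integral_add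
    hrate_cont.intervalIntegrable hdiss_cont.intervalIntegrable]
  ring

theorem stmt18_general (l T b : ℝ) (hl : 0 < l) (hb : 0 < b)
    (F G : ℝ → ℝ) (hF : ContDiff ℝ 1 F) (hG : ContDiff ℝ 1 G)
    (φ φt φx φxx φtx μx μxx : ℝ → ℝ → ℝ)
    (hφt : ∀ x ∈ Icc (0 : ℝ) l, ∀ t ∈ Ioo (0 : ℝ) T,
      HasDerivAt (fun τ => φ x τ) (φt x t) t)
    (hφx : ∀ x ∈ Icc (0 : ℝ) l, ∀ t ∈ Ioo (0 : ℝ) T,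
      HasDerivAt (fun y => φ y t) (φx x t) x)
    (hφxx : ∀ x ∈ Icc (0 : ℝ) l, ∀ t ∈ Ioo (0 : ℝ) T,
      HasDerivAt (fun y => φx y t) (φxx x t) x)
    (hφtx : ∀ x ∈ Icc (0 : ℝ) l, ∀ t ∈ Ioo (0 : ℝ) T,
      HasDerivAt (fun τ => φx x τ) (φtx x t) t)
    (hφxt : ∀ x ∈ Icc (0 : ℝ) l, ∀ t ∈ Ioo (0 : ℝ) T,
      HasDerivAt (fun y => φt y t) (φtx x t) x)
    (hμx : ∀ x ∈ Icc (0 : ℝ) l, ∀ t ∈ Ioo (0 : ℝ) T,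
      HasDerivAt (fun y => -φxx y t + deriv F (φ y t)) (μx x t) x)
    (hμxx : ∀ x ∈ Icc (0 : ℝ) l, ∀ t ∈ Ioo (0 : ℝ) T,
      HasDerivAt (fun y => μx y t) (μxx x t) x)
    (hφc : ContinuousOn (fun p : ℝ × ℝ => φ p.1 p.2) (Icc (0 : ℝ) l ×ˢ Ioo (0 : ℝ) T))
    (hφtc : ContinuousOn (fun p : ℝ × ℝ => φt p.1 p.2) (Icc (0 : ℝ) l ×ˢ Ioo (0 : ℝ) T))
    (hφxc : ContinuousOn (fun p : ℝ × ℝ => φx p.1 p.2) (Icc (0 : ℝ) l ×ˢ Ioo (0 : ℝ) T))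
    (hφtxc : ContinuousOn (fun p : ℝ × ℝ => φtx p.1 p.2) (Icc (0 : ℝ) l ×ˢ Ioo (0 : ℝ) T))
    (hpde : ∀ x ∈ Icc (0 : ℝ) l, ∀ t ∈ Ioo (0 : ℝ) T, φt x t = μxx x t)
    (hbc0 : ∀ t ∈ Ioo (0 : ℝ) T, φt 0 t - b * μx 0 t = 0)
    (hbcl : ∀ t ∈ Ioo (0 : ℝ) T, φt l t + b * μx l t = 0)
    (hbcμ0 : ∀ t ∈ Ioo (0 : ℝ) T,
      (-φxx 0 t + deriv F (φ 0 t)) / b = -φx 0 t + deriv G (φ 0 t))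
    (hbcμl : ∀ t ∈ Ioo (0 : ℝ) T,
      (-φxx l t + deriv F (φ l t)) / b = φx l t + deriv G (φ l t)) :
    ∀ t ∈ Ioo (0 : ℝ) T,
      HasDerivAt
        (fun τ => (∫ x in (0 : ℝ)..l, (1 / 2 * (φx x τ) ^ 2 + F (φ x τ))) +
          G (φ 0 τ) + G (φ l τ))
        (-∫ x in (0 : ℝ)..l, (μx x t) ^ 2) t := by
  intro t ht
  rw [← uIcc_of_le hl.le] at hφt hφx hφxx hφtx hφxt hμx hμxx hφc hφtc hφxc hφtxc hpde
  have hbulk := hasDerivAt_integral_ginzburgLandau hF isOpen_Ioo hφt hφtx hφc hφtc hφxc hφtxc ht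
  have hsurf : ∀ x ∈ [[0, l]], HasDerivAt (fun τ => G (φ x τ)) (deriv G (φ x t) * φt x t) t :=
    fun x hx => (hG.differentiable one_ne_zero (φ x t)).hasDerivAt.comp t (hφt x hx t ht)
  have hrate := integral_ginzburgLandau_rate_eq (hF.continuous_deriv le_rfl)
    (u := fun y => φ y t) (ux := fun y => φx y t) (uxx := fun y => φxx y t)
    (v := fun y => φt y t) (vx := fun y => φtx y t) (mx := fun y => μx y t)
    (mxx := fun y => μxx y t) (fun x hx => hφx x hx t ht) (fun x hx => hφxx x hx t ht)
    (fun x hx => hφxt x hx t ht) (hφtxc.uncurry_right t ht) (fun x hx => hμx x hx t ht)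
    (fun x hx => hμxx x hx t ht) (fun x hx => hpde x hx t ht)
  have hμ0 := (div_eq_iff hb.ne').mp (hbcμ0 t ht)
  have hμl := (div_eq_iff hb.ne').mp (hbcμl t ht)
  refine ((hbulk.add (hsurf 0 left_mem_uIcc)).add (hsurf l right_mem_uIcc)).congr_deriv ?_
  linear_combination hrate + μx l t * hμl + (φx l t + deriv G (φ l t)) * hbcl t ht -
    μx 0 t * hμ0 + (deriv G (φ 0 t) - φx 0 t) * hbc0 t ht

/-- Energy dissipation law for the one-dimensional Cahn–Hilliard equation `∂_t φ = ∂_x² μ`,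
`μ = -∂_x² φ + F'(φ)` on `Ω = (0,l)` with the Cahn–Hilliard type dynamic boundary
conditions `∂_t φ + b ∂_n μ = 0` and `μ/b = ∂_n φ + G'(φ)` (the case `σ = 0`, `c = 0`,
`κ = 0` for non-permeable walls; the outward normal derivative `∂_n` is `-∂_x` at `x = 0`
and `+∂_x` at `x = l`): the total free energy
`E(t) = ∫₀^l (1/2)(∂_x φ)² + F(φ) dx + G(φ(0,t)) + G(φ(l,t))` satisfies
`E'(t) = -∫₀^l (∂_x μ)² dx`. Here `φt, φx, φxx, φtx, μx, μxx` denote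
`∂_t φ, ∂_x φ, ∂_x² φ, ∂_t ∂_x φ = ∂_x ∂_t φ, ∂_x μ, ∂_x² μ`, all jointly continuous on
`[0,l] × (0,T)`, and `μ = -φxx + F'(φ)`. -/
theorem stmt18 (l T b : ℝ) (hl : 0 < l) (hT : 0 < T) (hb : 0 < b)
    (F G : ℝ → ℝ) (hF : ContDiff ℝ 1 F) (hG : ContDiff ℝ 1 G)
    (φ φt φx φxx φtx μx μxx : ℝ → ℝ → ℝ)
    (hφt : ∀ x ∈ Icc (0 : ℝ) l, ∀ t ∈ Ioo (0 : ℝ) T,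
      HasDerivAt (fun τ => φ x τ) (φt x t) t)
    (hφx : ∀ x ∈ Icc (0 : ℝ) l, ∀ t ∈ Ioo (0 : ℝ) T,
      HasDerivAt (fun y => φ y t) (φx x t) x)
    (hφxx : ∀ x ∈ Icc (0 : ℝ) l, ∀ t ∈ Ioo (0 : ℝ) T,
      HasDerivAt (fun y => φx y t) (φxx x t) x)
    (hφtx : ∀ x ∈ Icc (0 : ℝ) l, ∀ t ∈ Ioo (0 : ℝ) T,
      HasDerivAt (fun τ => φx x τ) (φtx x t) t)
    (hφxt : ∀ x ∈ Icc (0 : ℝ) l, ∀ t ∈ Ioo (0 : ℝ) T,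
      HasDerivAt (fun y => φt y t) (φtx x t) x)
    (hμx : ∀ x ∈ Icc (0 : ℝ) l, ∀ t ∈ Ioo (0 : ℝ) T,
      HasDerivAt (fun y => -φxx y t + deriv F (φ y t)) (μx x t) x)
    (hμxx : ∀ x ∈ Icc (0 : ℝ) l, ∀ t ∈ Ioo (0 : ℝ) T,
      HasDerivAt (fun y => μx y t) (μxx x t) x)
    (hφc : ContinuousOn (fun p : ℝ × ℝ => φ p.1 p.2) (Icc (0 : ℝ) l ×ˢ Ioo (0 : ℝ) T))
    (hφtc : ContinuousOn (fun p : ℝ × ℝ => φt p.1 p.2) (Icc (0 : ℝ) l ×ˢ Ioo (0 : ℝ) T))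
    (hφxc : ContinuousOn (fun p : ℝ × ℝ => φx p.1 p.2) (Icc (0 : ℝ) l ×ˢ Ioo (0 : ℝ) T))
    (hφxxc : ContinuousOn (fun p : ℝ × ℝ => φxx p.1 p.2) (Icc (0 : ℝ) l ×ˢ Ioo (0 : ℝ) T))
    (hφtxc : ContinuousOn (fun p : ℝ × ℝ => φtx p.1 p.2) (Icc (0 : ℝ) l ×ˢ Ioo (0 : ℝ) T))
    (hμxc : ContinuousOn (fun p : ℝ × ℝ => μx p.1 p.2) (Icc (0 : ℝ) l ×ˢ Ioo (0 : ℝ) T))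
    (hμxxc : ContinuousOn (fun p : ℝ × ℝ => μxx p.1 p.2) (Icc (0 : ℝ) l ×ˢ Ioo (0 : ℝ) T))
    (hpde : ∀ x ∈ Icc (0 : ℝ) l, ∀ t ∈ Ioo (0 : ℝ) T, φt x t = μxx x t)
    (hbc0 : ∀ t ∈ Ioo (0 : ℝ) T, φt 0 t - b * μx 0 t = 0)
    (hbcl : ∀ t ∈ Ioo (0 : ℝ) T, φt l t + b * μx l t = 0)
    (hbcμ0 : ∀ t ∈ Ioo (0 : ℝ) T,
      (-φxx 0 t + deriv F (φ 0 t)) / b = -φx 0 t + deriv G (φ 0 t))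
    (hbcμl : ∀ t ∈ Ioo (0 : ℝ) T,
      (-φxx l t + deriv F (φ l t)) / b = φx l t + deriv G (φ l t)) :
    ∀ t ∈ Ioo (0 : ℝ) T,
      HasDerivAt
        (fun τ => (∫ x in (0 : ℝ)..l, (1 / 2 * (φx x τ) ^ 2 + F (φ x τ))) +
          G (φ 0 τ) + G (φ l τ))
        (-∫ x in (0 : ℝ)..l, (μx x t) ^ 2) t :=
  stmt18_general l T b hl hb F G hF hG φ φt φx φxx φtx μx μxx hφt hφx hφxx hφtx hφxt hμx hμxx hφc
    hφtc hφxc hφtxc hpde hbc0 hbcl hbcμ0 hbcμl
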